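/- arXiv:1407.0602 — 2 statements merged into one kernel-verified Lean document; each statement's English description precedes it below -/
import Mathlib

section
/- For a shape-regular quadrilateral K (h_K ≤ ϱρ_K), the coefficients of the bilinear map satisfy: ρ_K² < 4(a_1² + b_1²) < h_K², ρ_K² < 4(a_2² + b_2²) < h_K², and 4(a_12² + b_12²) < h_K²/4. -/
open Metric Set

/-- The diameter of the largest circle inscribed in a plane set. -/
noncomputable def inscribedDiameter (s : Set (EuclideanSpace ℝ (Fin 2))) : ℝ :=
  sSup {d : ℝ | 0 ≤ d ∧ ∃ c, Metric.closedBall c (d / 2) ⊆ s}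

/-!
With `w₁ = (Z₁ - Z₀) + (Z₂ - Z₃)`, `w₂ = (Z₂ - Z₁) + (Z₃ - Z₀)` and `w₁₂ = (Z₀ - Z₁) + (Z₂ - Z₃)`,
the three quantities bounded are `‖w‖² / 4`.

Both `cross w₁ (Z₃ - Z₁)` and `cross w₂ (Z₃ - Z₁)` equal twice the area of `K`, the sum of twice
the areas of the two triangles on the diagonal `Z₁Z₃`. Twice the area of a triangle is its
inscribed diameter times half its perimeter, which exceeds `|Z₁Z₃| ρ_K`; hence `2 ρ_K < ‖w‖`.

The upper bounds for `w₁, w₂` come from the identity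
`‖(b - a) + (c - d)‖² = |ab|² + |cd|² + |ac|² + |bd|² - |ad|² - |bc|²`. For `D = w₁₂` and
`(a, b, c, d) = (Z₀, Z₁, Z₂, Z₃)`, write `‖D‖² = ⟪D, a - b⟫ + ⟪D, c - d⟫ = ⟪D, a - d⟫ + ⟪D, c - b⟫`,
each term at most `‖D‖ h_K`. If `h_K ≤ ‖D‖`, all four terms are nonnegative: `a, c` lie weakly
above `b, d` in the direction `D`, which the crossing of the diagonals `ac` and `bd` permits only
when `D = 0`.
-/

open scoped RealInnerProductSpace

section InnerProductSpace

variable {E : Type*} [NormedAddCommGroup E] [InnerProductSpace ℝ E]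

theorem norm_sub_add_sub_sq (a b c d : E) :
    ‖b - a + (c - d)‖ ^ 2 = ‖b - a‖ ^ 2 + ‖c - d‖ ^ 2 + ‖c - a‖ ^ 2 + ‖d - b‖ ^ 2
      - ‖d - a‖ ^ 2 - ‖c - b‖ ^ 2 := by
  have h₁ : c - a = (b - a) + (c - d) + (d - b) := by abel
  have h₂ : d - a = (b - a) + (d - b) := by abel
  have h₃ : c - b = (c - d) + (d - b) := by abel
  rw [h₁, h₂, h₃]
  simp only [← real_inner_self_eq_norm_sq, inner_add_left, inner_add_right, real_inner_comm]
  ring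

theorem norm_sub_add_sub_sq_lt {a b c d : E} {h : ℝ} (hab : dist a b ≤ h) (hcd : dist c d ≤ h)
    (hac : dist a c ≤ h) (hbd : dist b d ≤ h) (had : a ≠ d) :
    ‖b - a + (c - d)‖ ^ 2 < 4 * h ^ 2 := by
  have hsq : ∀ {x y : E}, dist x y ≤ h → ‖y - x‖ ^ 2 ≤ h ^ 2 := fun hxy => by
    rw [norm_sub_rev, ← dist_eq_norm]
    exact pow_le_pow_left₀ dist_nonneg hxy 2
  have hda : 0 < ‖d - a‖ := norm_pos_iff.2 (sub_ne_zero.2 had.symm)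
  rw [norm_sub_add_sub_sq]
  nlinarith [hsq hab, hsq (dist_comm c d ▸ hcd), hsq hac, hsq hbd, sq_nonneg ‖c - b‖]

theorem add_mul_norm_le_inner_of_closedBall_subset {n c : E} {r t : ℝ} (hr : 0 ≤ r)
    (h : closedBall c r ⊆ {x | t ≤ ⟪n, x⟫}) : t + r * ‖n‖ ≤ ⟪n, c⟫ := by
  rcases eq_or_ne n 0 with rfl | hn
  · simpa using h (mem_closedBall_self hr)
  have hn' : 0 < ‖n‖ := norm_pos_iff.2 hn
  have hx : c - (r / ‖n‖) • n ∈ closedBall c r := by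
    rw [mem_closedBall, dist_eq_norm, sub_sub_cancel_left, norm_neg, norm_smul,
      Real.norm_of_nonneg (div_nonneg hr hn'.le), div_mul_cancel₀ _ hn'.ne']
  have := h hx
  rw [mem_ofPred_eq, inner_sub_right, real_inner_smul_right, real_inner_self_eq_norm_sq] at this
  field_simp at this
  linarith

/-- Where the diagonals `ac` and `bd` cross, a direction `v` cannot put `a, c` (weakly) above
`b, d` without levelling all four. -/
theorem inner_sub_add_inner_sub_eq_zero {a b c d x : E} (v : E) (hac : x ∈ openSegment ℝ a c)
    (hbd : x ∈ openSegment ℝ b d) (hab : 0 ≤ ⟪v, a - b⟫) (hcd : 0 ≤ ⟪v, c - d⟫)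
    (had : 0 ≤ ⟪v, a - d⟫) (hcb : 0 ≤ ⟪v, c - b⟫) : ⟪v, a - b⟫ + ⟪v, c - d⟫ = 0 := by
  obtain ⟨α, γ, hα, hγ, hαγ, rfl⟩ := hac
  obtain ⟨β, δ, hβ, hδ, hβδ, hx⟩ := hbd
  have hv := congrArg (⟪v, ·⟫) hx
  simp only [inner_add_right, real_inner_smul_right] at hv
  simp only [inner_sub_right] at *
  have hzero : α * β * (⟪v, a⟫ - ⟪v, b⟫) + α * δ * (⟪v, a⟫ - ⟪v, d⟫)
      + γ * β * (⟪v, c⟫ - ⟪v, b⟫) + γ * δ * (⟪v, c⟫ - ⟪v, d⟫) = 0 := by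
    linear_combination (⟪v, a⟫ * α + ⟪v, c⟫ * γ) * hβδ - (⟪v, b⟫ * β + ⟪v, d⟫ * δ) * hαγ - hv
  have h₁ := mul_nonneg (mul_pos hα hβ).le hab
  have h₂ := mul_nonneg (mul_pos hα hδ).le had
  have h₃ := mul_nonneg (mul_pos hγ hβ).le hcb
  have h₄ := mul_nonneg (mul_pos hγ hδ).le hcd
  have hab' : α * β * (⟪v, a⟫ - ⟪v, b⟫) = 0 := by linarith
  have hcd' : γ * δ * (⟪v, c⟫ - ⟪v, d⟫) = 0 := by linarith
  simp only [mul_eq_zero, hα.ne', hβ.ne', hγ.ne', hδ.ne', false_or] at hab' hcd'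
  linarith

theorem norm_sub_add_sub_lt_of_mem_openSegment {a b c d x : E} {h : ℝ}
    (hac : x ∈ openSegment ℝ a c) (hbd : x ∈ openSegment ℝ b d) (hh : 0 < h)
    (hab : dist a b ≤ h) (hcd : dist c d ≤ h) (had : dist a d ≤ h) (hcb : dist c b ≤ h) :
    ‖a - b + (c - d)‖ < h := by
  generalize hD : a - b + (c - d) = D
  have hside : ∀ {y z : E}, dist y z ≤ h → ⟪D, y - z⟫ ≤ ‖D‖ * h := fun hyz =>
    (real_inner_le_norm _ _).trans
      (mul_le_mul_of_nonneg_left (by rwa [dist_eq_norm] at hyz) (norm_nonneg _))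
  have hsplit₁ : ‖D‖ ^ 2 = ⟪D, a - b⟫ + ⟪D, c - d⟫ := by
    rw [← real_inner_self_eq_norm_sq, ← inner_add_right, hD]
  have hsplit₂ : ‖D‖ ^ 2 = ⟪D, a - d⟫ + ⟪D, c - b⟫ := by
    rw [← real_inner_self_eq_norm_sq, ← inner_add_right, ← hD]
    congr 1
    abel
  by_contra! hD
  have hDh : ‖D‖ * h ≤ ‖D‖ ^ 2 := by nlinarith [norm_nonneg D]
  have := inner_sub_add_inner_sub_eq_zero D hac hbd (by linarith [hside hcd])
    (by linarith [hside hab]) (by linarith [hside hcb]) (by linarith [hside had])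
  nlinarith

end InnerProductSpace

local notation "ℝ²" => EuclideanSpace ℝ (Fin 2)

/-- The planar cross product; `0 < cross (b - a) (c - b)` says that `a, b, c` turn
counterclockwise. -/
def cross (u v : ℝ²) : ℝ := u 0 * v 1 - u 1 * v 0

def rotate (u : ℝ²) : ℝ² := !₂[-u 1, u 0]

theorem norm_sq_eq_coord (u : ℝ²) : ‖u‖ ^ 2 = u 0 ^ 2 + u 1 ^ 2 := by
  simp [EuclideanSpace.norm_sq_eq, Fin.sum_univ_two]

theorem inner_rotate (u v : ℝ²) : ⟪rotate u, v⟫ = cross u v := by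
  simp only [rotate, cross, PiLp.inner_apply, RCLike.inner_apply, Real.ringHom_apply,
    Fin.sum_univ_two, Matrix.cons_val_zero, Matrix.cons_val_one, Matrix.cons_val_fin_one]
  ring

theorem norm_rotate (u : ℝ²) : ‖rotate u‖ = ‖u‖ := by
  rw [← sq_eq_sq₀ (norm_nonneg _) (norm_nonneg _), norm_sq_eq_coord, norm_sq_eq_coord]
  simp only [rotate, Matrix.cons_val_zero, Matrix.cons_val_one, Matrix.cons_val_fin_one]
  ring

theorem cross_le_norm_mul_norm (u v : ℝ²) : cross u v ≤ ‖u‖ * ‖v‖ := by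
  simpa [inner_rotate, norm_rotate] using real_inner_le_norm (rotate u) v

theorem ne_of_cross_pos {a b v : ℝ²} (h : 0 < cross (b - a) v) : a ≠ b := by
  rintro rfl
  simp [cross] at h

theorem cross_eq_zero_of_wbtw {a b c : ℝ²} (h : Wbtw ℝ a b c) : cross (b - a) (c - b) = 0 := by
  obtain ⟨t, -, rfl⟩ := h
  simp only [cross, AffineMap.lineMap_apply, vsub_eq_sub, vadd_eq_add, add_sub_cancel_right,
    PiLp.smul_apply, PiLp.sub_apply, smul_eq_mul, PiLp.add_apply]
  ring

theorem dist_lt_dist_add_dist_of_cross_pos {a b c : ℝ²} (h : 0 < cross (b - a) (c - b)) :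
    dist a c < dist a b + dist b c :=
  (dist_triangle a b c).lt_of_ne fun heq =>
    h.ne' (cross_eq_zero_of_wbtw (dist_add_dist_eq_iff.1 heq.symm))

theorem cross_cyclic (a b c : ℝ²) : cross (c - b) (a - c) = cross (b - a) (c - b) := by
  simp only [cross, PiLp.sub_apply]
  ring

theorem convexHull_triangle_subset_halfSpace {a b c : ℝ²} (h : 0 ≤ cross (b - a) (c - b)) :
    convexHull ℝ {a, b, c} ⊆ {x | ⟪rotate (b - a), a⟫ ≤ ⟪rotate (b - a), x⟫} := by
  refine convexHull_min ?_ (convex_halfSpace_ge (innerₛₗ ℝ (rotate (b - a))).isLinear _)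
  intro y hy
  rw [mem_ofPred_eq, ← sub_nonneg, ← inner_sub_right, inner_rotate]
  rcases hy with rfl | rfl | rfl
  · simp [cross]
  · simp [cross, mul_comm]
  · convert h using 1
    simp only [cross, PiLp.sub_apply]
    ring

theorem mul_dist_le_cross_of_closedBall_subset {a b c x : ℝ²} {r : ℝ} (hr : 0 ≤ r)
    (hball : closedBall x r ⊆ convexHull ℝ {a, b, c}) (h : 0 ≤ cross (b - a) (c - b)) :
    r * dist a b ≤ cross (b - a) (x - a) := by
  have := add_mul_norm_le_inner_of_closedBall_subset hr
    (hball.trans (convexHull_triangle_subset_halfSpace h))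
  rw [norm_rotate, ← dist_eq_norm'] at this
  rw [← inner_rotate, inner_sub_right]
  linarith

theorem inscribedDiameter_nonneg (s : Set ℝ²) : 0 ≤ inscribedDiameter s :=
  Real.sSup_nonneg fun _ hd => hd.1

theorem inscribedDiameter_triangle_le {a b c : ℝ²} (h : 0 < cross (b - a) (c - b)) :
    inscribedDiameter (convexHull ℝ {a, b, c}) ≤
      2 * cross (b - a) (c - b) / (dist a b + dist b c + dist c a) := by
  have hp : 0 < dist a b + dist b c + dist c a := by
    linarith [dist_lt_dist_add_dist_of_cross_pos h, dist_nonneg (x := a) (y := c),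
      dist_nonneg (x := c) (y := a)]
  refine Real.sSup_le (fun d ⟨hd, x, hball⟩ => ?_) (by positivity)
  have hbca : ({b, c, a} : Set ℝ²) = {a, b, c} := by
    ext; simp only [mem_insert_iff, mem_singleton_iff]; tauto
  have hcab : ({c, a, b} : Set ℝ²) = {a, b, c} := by
    ext; simp only [mem_insert_iff, mem_singleton_iff]; tauto
  have hr : 0 ≤ d / 2 := by positivity
  have hab := mul_dist_le_cross_of_closedBall_subset hr hball h.le
  have hbc := mul_dist_le_cross_of_closedBall_subset (a := b) (b := c) (c := a) hr
    (hbca ▸ hball) (cross_cyclic a b c ▸ h.le)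
  have hca := mul_dist_le_cross_of_closedBall_subset (a := c) (b := a) (c := b) hr
    (hcab ▸ hball) (cross_cyclic b c a ▸ cross_cyclic a b c ▸ h.le)
  have hsum : cross (b - a) (x - a) + cross (c - b) (x - b) + cross (a - c) (x - c) =
      cross (b - a) (c - b) := by
    simp only [cross, PiLp.sub_apply]
    ring
  rw [le_div_iff₀ hp]
  linarith

theorem dist_mul_inscribedDiameter_lt {a b c : ℝ²} (h : 0 < cross (b - a) (c - b)) :
    dist a c * inscribedDiameter (convexHull ℝ {a, b, c}) < cross (b - a) (c - b) := by
  have hp : 2 * dist a c < dist a b + dist b c + dist c a := by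
    linarith [dist_lt_dist_add_dist_of_cross_pos h, dist_comm c a]
  have hac : 0 ≤ dist a c := dist_nonneg
  calc dist a c * inscribedDiameter (convexHull ℝ {a, b, c})
      ≤ dist a c * (2 * cross (b - a) (c - b) / (dist a b + dist b c + dist c a)) :=
        mul_le_mul_of_nonneg_left (inscribedDiameter_triangle_le h) hac
    _ < cross (b - a) (c - b) := by
        rw [mul_div_assoc', div_lt_iff₀ (by linarith)]
        nlinarith

section Quadrilateral

variable {a b c d : ℝ²}

/-- The diagonals cross at the point dividing each of them in the ratio of the areas of the two
triangles it cuts off. -/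
theorem exists_mem_openSegment_diagonals (ha : 0 < cross (a - d) (b - a))
    (hb : 0 < cross (b - a) (c - b)) (hc : 0 < cross (c - b) (d - c))
    (hd : 0 < cross (d - c) (a - d)) :
    ∃ x, x ∈ openSegment ℝ a c ∧ x ∈ openSegment ℝ b d := by
  set S := cross (c - b) (d - c) + cross (a - d) (b - a)
  refine ⟨(cross (c - b) (d - c) / S) • a + (cross (a - d) (b - a) / S) • c,
    mem_openSegment_iff_div.2 ⟨_, _, hc, ha, rfl⟩, mem_openSegment_iff_div.2 ⟨_, _, hd, hb, ?_⟩⟩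
  have hS : cross (d - c) (a - d) + cross (b - a) (c - b) = S := by
    simp only [S, cross, PiLp.sub_apply]
    ring
  have hx : cross (c - b) (d - c) • a + cross (a - d) (b - a) • c =
      cross (d - c) (a - d) • b + cross (b - a) (c - b) • d := by
    ext i
    fin_cases i <;>
    · simp only [cross, PiLp.sub_apply, PiLp.add_apply, PiLp.smul_apply, smul_eq_mul,
        Fin.zero_eta, Fin.mk_one]
      ring
  simp only [hS, div_eq_inv_mul, mul_smul, ← smul_add, hx]

theorem two_mul_lt_norm_of_cross {u w : ℝ²} {ρ s t : ℝ} (hs : ‖u‖ * ρ < s) (ht : ‖u‖ * ρ < t)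
    (h : cross w u = s + t) : 2 * ρ < ‖w‖ := by
  refine lt_of_mul_lt_mul_left ?_ (norm_nonneg u)
  linarith [cross_le_norm_mul_norm w u, mul_comm ‖w‖ ‖u‖]

theorem two_mul_lt_norm_of_le_inscribedDiameter {ρ : ℝ} (ha : 0 < cross (a - d) (b - a))
    (hc : 0 < cross (c - b) (d - c))
    (hρa : ρ ≤ inscribedDiameter (convexHull ℝ {d, a, b}))
    (hρc : ρ ≤ inscribedDiameter (convexHull ℝ {b, c, d})) :
    2 * ρ < ‖b - a + (c - d)‖ ∧ 2 * ρ < ‖c - b + (d - a)‖ := by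
  have hta : ‖d - b‖ * ρ < cross (a - d) (b - a) := by
    rw [← dist_eq_norm]
    exact (mul_le_mul_of_nonneg_left hρa dist_nonneg).trans_lt
      (dist_mul_inscribedDiameter_lt ha)
  have htc : ‖d - b‖ * ρ < cross (c - b) (d - c) := by
    rw [← dist_eq_norm']
    exact (mul_le_mul_of_nonneg_left hρc dist_nonneg).trans_lt
      (dist_mul_inscribedDiameter_lt hc)
  constructor
  · refine two_mul_lt_norm_of_cross hta htc ?_
    simp only [cross, PiLp.add_apply, PiLp.sub_apply]
    ring
  · refine two_mul_lt_norm_of_cross hta htc ?_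
    simp only [cross, PiLp.add_apply, PiLp.sub_apply]
    ring

end Quadrilateral

theorem four_mul_coeff_sq (u : ℝ²) : 4 * ((u 0 / 4) ^ 2 + (u 1 / 4) ^ 2) = ‖u‖ ^ 2 / 4 := by
  rw [norm_sq_eq_coord]
  ring

theorem bilinear_coefficient_bounds_general
    (Z : Fin 4 → EuclideanSpace ℝ (Fin 2))
    -- the vertices are in convex (counterclockwise) cyclic position
    (hconvex : ∀ i : Fin 4,
      0 < (Z (i+1) 0 - Z i 0) * (Z (i+2) 1 - Z (i+1) 1)
          - (Z (i+1) 1 - Z i 1) * (Z (i+2) 0 - Z (i+1) 0))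
    (hK ρK : ℝ)
    (hhK : hK = Metric.diam (convexHull ℝ (Set.range Z)))
    (hρK : ρK = ⨅ i : Fin 4, inscribedDiameter (convexHull ℝ {Z (i-1), Z i, Z (i+1)}))
    (a1 a2 a12 b1 b2 b12 : ℝ)
    (ha1 : a1 = (-(Z 0 0) + Z 1 0 + Z 2 0 - Z 3 0) / 4)
    (ha2 : a2 = (-(Z 0 0) - Z 1 0 + Z 2 0 + Z 3 0) / 4)
    (ha12 : a12 = (Z 0 0 - Z 1 0 + Z 2 0 - Z 3 0) / 4)
    (hb1 : b1 = (-(Z 0 1) + Z 1 1 + Z 2 1 - Z 3 1) / 4)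
    (hb2 : b2 = (-(Z 0 1) - Z 1 1 + Z 2 1 + Z 3 1) / 4)
    (hb12 : b12 = (Z 0 1 - Z 1 1 + Z 2 1 - Z 3 1) / 4) :
    (ρK ^ 2 < 4 * (a1 ^ 2 + b1 ^ 2) ∧ 4 * (a1 ^ 2 + b1 ^ 2) < hK ^ 2) ∧
    (ρK ^ 2 < 4 * (a2 ^ 2 + b2 ^ 2) ∧ 4 * (a2 ^ 2 + b2 ^ 2) < hK ^ 2) ∧
    4 * (a12 ^ 2 + b12 ^ 2) < hK ^ 2 / 4 := by
  have h0 : 0 < cross (Z 1 - Z 0) (Z 2 - Z 1) := hconvex 0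
  have h1 : 0 < cross (Z 2 - Z 1) (Z 3 - Z 2) := hconvex 1
  have h2 : 0 < cross (Z 3 - Z 2) (Z 0 - Z 3) := hconvex 2
  have h3 : 0 < cross (Z 0 - Z 3) (Z 1 - Z 0) := hconvex 3
  have hd : ∀ i j, dist (Z i) (Z j) ≤ hK := fun i j => hhK ▸
    dist_le_diam_of_mem ((finite_range Z).isCompact_convexHull (𝕜 := ℝ)).isBounded
      (subset_convexHull ℝ _ (mem_range_self i)) (subset_convexHull ℝ _ (mem_range_self j))
  have hρ : ∀ i, ρK ≤ inscribedDiameter (convexHull ℝ {Z (i-1), Z i, Z (i+1)}) := fun i =>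
    hρK ▸ ciInf_le ⟨0, forall_mem_range.2 fun _ => inscribedDiameter_nonneg _⟩ i
  have hρ0 : 0 ≤ ρK := hρK ▸ Real.iInf_nonneg fun _ => inscribedDiameter_nonneg _
  obtain ⟨hw1, hw2⟩ := two_mul_lt_norm_of_le_inscribedDiameter h3 h1 (hρ 0) (hρ 2)
  obtain ⟨x, hx02, hx13⟩ := exists_mem_openSegment_diagonals h3 h0 h1 h2
  have hw12 := norm_sub_add_sub_lt_of_mem_openSegment hx02 hx13
    ((dist_pos.2 (ne_of_cross_pos h0)).trans_le (hd 0 1)) (hd 0 1) (hd 2 3) (hd 0 3) (hd 2 1)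
  have hu1 := norm_sub_add_sub_sq_lt (hd 0 1) (hd 2 3) (hd 0 2) (hd 1 3) (ne_of_cross_pos h3).symm
  have hu2 := norm_sub_add_sub_sq_lt (hd 1 2) (hd 3 0) (hd 1 3) (hd 2 0) (ne_of_cross_pos h0).symm
  have e1 := four_mul_coeff_sq (Z 1 - Z 0 + (Z 2 - Z 3))
  have e2 := four_mul_coeff_sq (Z 2 - Z 1 + (Z 3 - Z 0))
  have e12 := four_mul_coeff_sq (Z 0 - Z 1 + (Z 2 - Z 3))
  simp only [PiLp.add_apply, PiLp.sub_apply] at e1 e2 e12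
  subst ha1 ha2 ha12 hb1 hb2 hb12
  have l1 := pow_lt_pow_left₀ hw1 (by positivity) two_ne_zero
  have l2 := pow_lt_pow_left₀ hw2 (by positivity) two_ne_zero
  have l12 := pow_lt_pow_left₀ hw12 (norm_nonneg _) two_ne_zero
  refine ⟨⟨?_, ?_⟩, ⟨?_, ?_⟩, ?_⟩ <;> linarith

/-- For a shape-regular convex quadrilateral `K` (with `h_K ≤ ϱ ρ_K`), the coefficients of the
bilinear map satisfy `ρ_K² < 4(a1² + b1²) < h_K²`, `ρ_K² < 4(a2² + b2²) < h_K²`, and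
`4(a12² + b12²) < h_K²/4`. -/
theorem bilinear_coefficient_bounds
    (Z : Fin 4 → EuclideanSpace ℝ (Fin 2)) (ϱ : ℝ) (hϱ : 2 < ϱ)
    -- the vertices are in convex (counterclockwise) cyclic position
    (hconvex : ∀ i : Fin 4,
      0 < (Z (i+1) 0 - Z i 0) * (Z (i+2) 1 - Z (i+1) 1)
          - (Z (i+1) 1 - Z i 1) * (Z (i+2) 0 - Z (i+1) 0))
    (hK ρK : ℝ)
    (hhK : hK = Metric.diam (convexHull ℝ (Set.range Z)))
    (hρK : ρK = ⨅ i : Fin 4, inscribedDiameter (convexHull ℝ {Z (i-1), Z i, Z (i+1)}))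
    (hreg : hK ≤ ϱ * ρK)
    (a1 a2 a12 b1 b2 b12 : ℝ)
    (ha1 : a1 = (-(Z 0 0) + Z 1 0 + Z 2 0 - Z 3 0) / 4)
    (ha2 : a2 = (-(Z 0 0) - Z 1 0 + Z 2 0 + Z 3 0) / 4)
    (ha12 : a12 = (Z 0 0 - Z 1 0 + Z 2 0 - Z 3 0) / 4)
    (hb1 : b1 = (-(Z 0 1) + Z 1 1 + Z 2 1 - Z 3 1) / 4)
    (hb2 : b2 = (-(Z 0 1) - Z 1 1 + Z 2 1 + Z 3 1) / 4)
    (hb12 : b12 = (Z 0 1 - Z 1 1 + Z 2 1 - Z 3 1) / 4) :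
    (ρK ^ 2 < 4 * (a1 ^ 2 + b1 ^ 2) ∧ 4 * (a1 ^ 2 + b1 ^ 2) < hK ^ 2) ∧
    (ρK ^ 2 < 4 * (a2 ^ 2 + b2 ^ 2) ∧ 4 * (a2 ^ 2 + b2 ^ 2) < hK ^ 2) ∧
    4 * (a12 ^ 2 + b12 ^ 2) < hK ^ 2 / 4 :=
  bilinear_coefficient_bounds_general Z hconvex hK ρK hhK hρK a1 a2 a12 b1 b2 b12 ha1 ha2 ha12 hb1
    hb2 hb12
end

section
/- Lemma (element-wise stress lower bound): For any stress τ in the 7-parameter mode with parameter vector β^τ ∈ ℝ⁷, ‖τ‖²_{0,K} ≥ c · min_{(ξ,η)∈K̂} J_K(ξ,η) · Σ_{i=1}^{7} (β_i^τ)², where c > 0 depends only on the shape-regularity constant. -/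
/-!
The integrand is `(∑ᵢ wᵢ sᵢ²) · J` with weights `w = (1, 1, 2)` and `sᵢ = uᵢ + pᵢ ξ + qᵢ η` the
affine stress components, so `J ≥ Jmin` on the reference square bounds the integral below by
`Jmin ∫∫ ∑ᵢ wᵢ sᵢ²`. On `[-1, 1]²` the functions `1, ξ, η` are orthogonal with squared norms
`4, 4/3, 4/3`, so this equals `Jmin ∑ᵢ wᵢ (4 uᵢ² + 4/3 pᵢ² + 4/3 qᵢ²)`. The constant terms are
`β₀, β₁, β₂` and the slopes of the normal components `s₁, s₂` are `β₃, …, β₆`, whence `c = 4/3`.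
-/

open Set Function intervalIntegral

theorem integral_quadratic_neg_one_one (a b c : ℝ) :
    ∫ x in (-1 : ℝ)..1, (a + b * x + c * x ^ 2) = 2 * a + 2 / 3 * c := by
  have hint {f : ℝ → ℝ} (hf : Continuous f) : IntervalIntegrable f MeasureTheory.volume (-1) 1 :=
    hf.intervalIntegrable _ _
  rw [integral_add (hint (by fun_prop)) (hint (by fun_prop)),
    integral_add (hint (by fun_prop)) (hint (by fun_prop)),
    integral_const_mul, integral_const_mul, integral_id, integral_pow]
  norm_num
  ring

theorem integral_integral_quadratic_neg_one_one (c₀ c₁ c₂ c₁₁ c₁₂ c₂₂ : ℝ) :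
    ∫ ξ in (-1 : ℝ)..1, ∫ η in (-1 : ℝ)..1,
        (c₀ + c₁ * ξ + c₂ * η + c₁₁ * ξ ^ 2 + c₁₂ * ξ * η + c₂₂ * η ^ 2)
      = 4 * c₀ + 4 / 3 * c₁₁ + 4 / 3 * c₂₂ := by
  have hinner (ξ : ℝ) : ∫ η in (-1 : ℝ)..1,
      (c₀ + c₁ * ξ + c₂ * η + c₁₁ * ξ ^ 2 + c₁₂ * ξ * η + c₂₂ * η ^ 2)
        = (2 * c₀ + 2 / 3 * c₂₂) + 2 * c₁ * ξ + 2 * c₁₁ * ξ ^ 2 := by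
    convert integral_quadratic_neg_one_one (c₀ + c₁ * ξ + c₁₁ * ξ ^ 2) (c₂ + c₁₂ * ξ) c₂₂
      using 1
    · congr 1 with η; ring
    · ring
  simp_rw [hinner, integral_quadratic_neg_one_one]
  ring

theorem integral_integral_sum_mul_sq_affine {ι : Type*} [Fintype ι] (w u p q : ι → ℝ) :
    ∫ ξ in (-1 : ℝ)..1, ∫ η in (-1 : ℝ)..1, ∑ i, w i * (u i + p i * ξ + q i * η) ^ 2
      = ∑ i, w i * (4 * u i ^ 2 + 4 / 3 * p i ^ 2 + 4 / 3 * q i ^ 2) := by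
  convert integral_integral_quadratic_neg_one_one (∑ i, w i * u i ^ 2)
    (∑ i, 2 * w i * u i * p i) (∑ i, 2 * w i * u i * q i) (∑ i, w i * p i ^ 2)
    (∑ i, 2 * w i * p i * q i) (∑ i, w i * q i ^ 2) using 1
  · congr 1 with ξ
    congr 1 with η
    simp only [Finset.sum_mul, ← Finset.sum_add_distrib]
    exact Finset.sum_congr rfl fun i _ => by ring
  · simp only [Finset.mul_sum, ← Finset.sum_add_distrib]
    exact Finset.sum_congr rfl fun i _ => by ring

theorem integral_integral_mono_on {f g : ℝ → ℝ → ℝ} {a b c d : ℝ}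
    (hf : Continuous (uncurry f)) (hg : Continuous (uncurry g)) (hab : a ≤ b) (hcd : c ≤ d)
    (h : ∀ x ∈ Icc a b, ∀ y ∈ Icc c d, f x y ≤ g x y) :
    ∫ x in a..b, ∫ y in c..d, f x y ≤ ∫ x in a..b, ∫ y in c..d, g x y :=
  integral_mono_on hab
    ((continuous_parametric_intervalIntegral_of_continuous' hf c d).intervalIntegrable a b)
    ((continuous_parametric_intervalIntegral_of_continuous' hg c d).intervalIntegrable a b)
    fun x hx => integral_mono_on hcd (hf.uncurry_left x |>.intervalIntegrable c d)
      (hg.uncurry_left x |>.intervalIntegrable c d) (h x hx)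

theorem le_integral_integral_sum_mul_sq_affine_mul {ι : Type*} [Fintype ι] {J : ℝ → ℝ → ℝ}
    {Jmin : ℝ} (hJ : Continuous (uncurry J))
    (hJmin : ∀ ξ ∈ Icc (-1 : ℝ) 1, ∀ η ∈ Icc (-1 : ℝ) 1, Jmin ≤ J ξ η)
    {w : ι → ℝ} (hw : ∀ i, 0 ≤ w i) (u p q : ι → ℝ) :
    Jmin * ∑ i, w i * (4 * u i ^ 2 + 4 / 3 * p i ^ 2 + 4 / 3 * q i ^ 2)
      ≤ ∫ ξ in (-1 : ℝ)..1, ∫ η in (-1 : ℝ)..1,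
          (∑ i, w i * (u i + p i * ξ + q i * η) ^ 2) * J ξ η := by
  rw [← integral_integral_sum_mul_sq_affine]
  simp only [← integral_const_mul]
  refine integral_integral_mono_on (by fun_prop) (by fun_prop) (by norm_num) (by norm_num) ?_
  intro ξ hξ η hη
  rw [mul_comm Jmin]
  exact mul_le_mul_of_nonneg_left (hJmin ξ hξ η hη)
    (Finset.sum_nonneg fun i _ => mul_nonneg (hw i) (sq_nonneg _))

/-- Element-wise stress lower bound for the 7-parameter stress mode: the squared `L²` norm of
the stress, `∫ (τ̂₁₁² + τ̂₂₂² + 2 τ̂₁₂²) J_K`, is bounded below by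
`c · (min J_K) · Σᵢ (βᵢᵗ)²`, with `c > 0` depending only on the shape-regularity constant. -/
theorem transition_stress_lower_bound :
    ∀ ϱ : ℝ, 2 < ϱ → ∃ c : ℝ, 0 < c ∧
      ∀ (a1 a2 a12 b1 b2 b12 hK ρK Jmin J0 : ℝ) (β : Fin 7 → ℝ) (J : ℝ → ℝ → ℝ),
        J0 = a1 * b2 - a2 * b1 →
        (∀ ξ η, J ξ η = J0 + (a1 * b12 - a12 * b1) * ξ + (a12 * b2 - a2 * b12) * η) →
        0 < ρK → hK ≤ ϱ * ρK →
        ρK ^ 2 < 4 * (a1 ^ 2 + b1 ^ 2) → 4 * (a1 ^ 2 + b1 ^ 2) < hK ^ 2 →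
        ρK ^ 2 < 4 * (a2 ^ 2 + b2 ^ 2) → 4 * (a2 ^ 2 + b2 ^ 2) < hK ^ 2 →
        4 * (a12 ^ 2 + b12 ^ 2) < hK ^ 2 / 4 →
        |b1| ≤ a1 → |a2| ≤ b2 →
        0 < Jmin →
        (∀ ξ ∈ Set.Icc (-1 : ℝ) 1, ∀ η ∈ Set.Icc (-1 : ℝ) 1,
          Jmin ≤ J ξ η ∧ hK ^ 2 ≤ ϱ ^ 2 * J ξ η ∧ J ξ η ≤ hK ^ 2) →
        c * Jmin * ∑ i, (β i) ^ 2
          ≤ ∫ ξ in (-1 : ℝ)..1, ∫ η in (-1 : ℝ)..1,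
            ((β 0 + β 3 * η + β 5 * ξ) ^ 2
              + (β 1 + β 4 * ξ + β 6 * η) ^ 2
              + 2 * (β 2 + β 3 * ((b1 ^ 2 * ξ + b1 * b2 * η) / J0)
                  + β 4 * ((a1 * a2 * ξ + a2 ^ 2 * η) / J0)
                  - β 5 * ((b1 * b2 * ξ + b2 ^ 2 * η) / J0)
                  - β 6 * ((a1 ^ 2 * ξ + a1 * a2 * η) / J0)) ^ 2) * J ξ η := by
  intro ϱ _
  refine ⟨4 / 3, by norm_num, ?_⟩
  intro a1 a2 a12 b1 b2 b12 hK ρK Jmin J0 β J _ hJ _ _ _ _ _ _ _ _ _ hJmin hbound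
  set w : Fin 3 → ℝ := ![1, 1, 2]
  set u : Fin 3 → ℝ := ![β 0, β 1, β 2]
  set p : Fin 3 → ℝ :=
    ![β 5, β 4, (β 3 * b1 ^ 2 + β 4 * (a1 * a2) - β 5 * (b1 * b2) - β 6 * a1 ^ 2) / J0]
  set q : Fin 3 → ℝ :=
    ![β 3, β 6, (β 3 * (b1 * b2) + β 4 * a2 ^ 2 - β 5 * b2 ^ 2 - β 6 * (a1 * a2)) / J0]
  have hw : ∀ i, 0 ≤ w i := by intro i; fin_cases i <;> simp [w]
  have hJ_cont : Continuous (uncurry J) := by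
    rw [show uncurry J = fun z => J0 + (a1 * b12 - a12 * b1) * z.1 + (a12 * b2 - a2 * b12) * z.2
      from funext fun z => hJ z.1 z.2]
    fun_prop
  have hcoeff : 4 / 3 * ∑ i, β i ^ 2
      ≤ ∑ i, w i * (4 * u i ^ 2 + 4 / 3 * p i ^ 2 + 4 / 3 * q i ^ 2) := by
    simp only [w, u, p, q, Fin.sum_univ_seven, Fin.sum_univ_three, Matrix.cons_val_zero,
      Matrix.cons_val_one, Matrix.cons_val_two, Matrix.tail_cons, Matrix.head_cons]
    nlinarith [sq_nonneg (β 0), sq_nonneg (β 1), sq_nonneg (β 2), sq_nonneg (p 2), sq_nonneg (q 2)]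
  calc 4 / 3 * Jmin * ∑ i, β i ^ 2
      = Jmin * (4 / 3 * ∑ i, β i ^ 2) := by ring
    _ ≤ Jmin * ∑ i, w i * (4 * u i ^ 2 + 4 / 3 * p i ^ 2 + 4 / 3 * q i ^ 2) := by gcongr
    _ ≤ ∫ ξ in (-1 : ℝ)..1, ∫ η in (-1 : ℝ)..1,
          (∑ i, w i * (u i + p i * ξ + q i * η) ^ 2) * J ξ η :=
        le_integral_integral_sum_mul_sq_affine_mul hJ_cont (fun ξ hξ η hη => (hbound ξ hξ η hη).1)
          hw u p q
    _ = _ := by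
        refine integral_congr fun ξ _ => integral_congr fun η _ => ?_
        simp only [w, u, p, q, Fin.sum_univ_three, Matrix.cons_val_zero, Matrix.cons_val_one,
          Matrix.cons_val_two, Matrix.tail_cons, Matrix.head_cons]
        ring
end
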